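/- Let s, t, p ≥ 1 be real numbers, A, B invertible n×n complex matrices and Q an n×n Hermitian positive definite matrix. The equation X^s + A*X^{-t}A + B*X^{-p}B = Q has a Hermitian positive definite solution if and only if there exist a unitary matrix U, a diagonal matrix Λ with positive diagonal entries, and n×n matrices N₁, N₂ such that A = (UΛU*)^(t/(2s)) N₁, B = (UΛU*)^(p/(2s)) N₂, and the 3n×n block matrix M with blocks Λ^(1/2) U* Q^(−1/2), N₁ Q^(−1/2), N₂ Q^(−1/2) stacked vertically is column orthonormal, i.e. M*M = I. -/

import Mathlib

open Matrix Filter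
open scoped ComplexOrder

/-- Real power of a Hermitian matrix, via the spectral decomposition
(junk value `X` if `X` is not Hermitian). -/
noncomputable def hrpow {n : ℕ} (X : Matrix (Fin n) (Fin n) ℂ) (r : ℝ) :
    Matrix (Fin n) (Fin n) ℂ :=
  if hX : X.IsHermitian then
    (hX.eigenvectorUnitary : Matrix (Fin n) (Fin n) ℂ) *
      Matrix.diagonal (fun i => ((hX.eigenvalues i ^ r : ℝ) : ℂ)) *
      (hX.eigenvectorUnitary : Matrix (Fin n) (Fin n) ℂ)ᴴ
  else X

/-- Largest eigenvalue of a Hermitian matrix (junk value `0` otherwise). -/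
noncomputable def lamMax {n : ℕ} (X : Matrix (Fin n) (Fin n) ℂ) : ℝ :=
  if hX : X.IsHermitian then ⨆ i, hX.eigenvalues i else 0

/-- Smallest eigenvalue of a Hermitian matrix (junk value `0` otherwise). -/
noncomputable def lamMin {n : ℕ} (X : Matrix (Fin n) (Fin n) ℂ) : ℝ :=
  if hX : X.IsHermitian then ⨅ i, hX.eigenvalues i else 0

/-- The spectral (ℓ²-operator) norm of a complex matrix. -/
noncomputable def specNorm {n : ℕ} (A : Matrix (Fin n) (Fin n) ℂ) : ℝ :=
  ‖Matrix.toEuclideanCLM (𝕜 := ℂ) A‖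

/-- The spectral radius of a complex matrix. -/
noncomputable def specRad {n : ℕ} (A : Matrix (Fin n) (Fin n) ℂ) : ℝ :=
  (spectralRadius ℂ A).toReal

/-- The Loewner order: `lle X Y` iff `Y - X` is positive semidefinite. -/
def lle {n : ℕ} (X Y : Matrix (Fin n) (Fin n) ℂ) : Prop := (Y - X).PosSemidef

section aux
variable {n : ℕ}

lemma contOn_finite {S : Set ℝ} (hS : S.Finite) (f : ℝ → ℝ) : ContinuousOn f S := by
  rw [continuousOn_iff_continuous_restrict]
  have := hS.to_subtype
  fun_prop

lemma contOn_spec (f : ℝ → ℝ) (X : Matrix (Fin n) (Fin n) ℂ) :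
    ContinuousOn f (spectrum ℝ X) :=
  contOn_finite (Matrix.finite_real_spectrum (A := X)) f

lemma hrpow_eq {X : Matrix (Fin n) (Fin n) ℂ} (hX : X.IsHermitian) (r : ℝ) :
    hrpow X r = cfc (fun x : ℝ => x ^ r) X := by
  rw [hrpow, dif_pos hX, hX.cfc_eq]
  rfl

lemma spectrum_pos {X : Matrix (Fin n) (Fin n) ℂ} (hX : X.PosDef) :
    ∀ x ∈ spectrum ℝ X, 0 < x := by
  intro x hx
  rw [hX.1.spectrum_real_eq_range_eigenvalues] at hx
  obtain ⟨i, rfl⟩ := hx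
  exact hX.eigenvalues_pos i

lemma hrpow_isHermitian {X : Matrix (Fin n) (Fin n) ℂ} (hX : X.IsHermitian) (r : ℝ) :
    (hrpow X r).IsHermitian := by
  rw [hrpow_eq hX]
  exact cfc_predicate _ _

lemma posDef_conj {D C : Matrix (Fin n) (Fin n) ℂ} (hD : D.PosDef) (hC : IsUnit C) :
    (C * D * Cᴴ).PosDef := by
  exact hD.mul_mul_conjTranspose_same (Matrix.vecMul_injective_iff_isUnit.mpr hC)

lemma hrpow_posDef {X : Matrix (Fin n) (Fin n) ℂ} (hX : X.PosDef) (r : ℝ) :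
    (hrpow X r).PosDef := by
  rw [hrpow, dif_pos hX.1]
  have hU : IsUnit (hX.1.eigenvectorUnitary : Matrix (Fin n) (Fin n) ℂ) :=
    ⟨Unitary.toUnits hX.1.eigenvectorUnitary, rfl⟩
  exact posDef_conj (Matrix.PosDef.diagonal fun i =>
    by exact_mod_cast Real.rpow_pos_of_pos (hX.eigenvalues_pos i) r) hU

lemma hrpow_mul_hrpow {X : Matrix (Fin n) (Fin n) ℂ} (hX : X.PosDef) (a b : ℝ) :
    hrpow X a * hrpow X b = hrpow X (a + b) := by
  rw [hrpow_eq hX.1, hrpow_eq hX.1, hrpow_eq hX.1,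
    ← cfc_mul _ _ X (contOn_spec _ _) (contOn_spec _ _)]
  exact cfc_congr fun x hx => (Real.rpow_add (spectrum_pos hX x hx) a b).symm

lemma hrpow_hrpow {X : Matrix (Fin n) (Fin n) ℂ} (hX : X.PosDef) (a b : ℝ) :
    hrpow (hrpow X a) b = hrpow X (a * b) := by
  have h := cfc_comp' (fun x : ℝ => x ^ b) (fun x : ℝ => x ^ a) X
    (contOn_finite ((Matrix.finite_real_spectrum (A := X)).image (fun x : ℝ => x ^ a)) _)
    (contOn_spec _ _) hX.1
  rw [hrpow_eq (hrpow_isHermitian hX.1 a), hrpow_eq hX.1, hrpow_eq hX.1, ← h]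
  exact cfc_congr fun x hx => (Real.rpow_mul (spectrum_pos hX x hx).le a b).symm

lemma hrpow_zero {X : Matrix (Fin n) (Fin n) ℂ} (hX : X.IsHermitian) : hrpow X 0 = 1 := by
  rw [hrpow_eq hX]
  simp only [Real.rpow_zero]
  exact cfc_const_one ℝ X hX

lemma hrpow_one {X : Matrix (Fin n) (Fin n) ℂ} (hX : X.IsHermitian) : hrpow X 1 = X := by
  rw [hrpow_eq hX]
  simp only [Real.rpow_one]
  exact cfc_id' ℝ X hX

lemma conj_block {C R : Matrix (Fin n) (Fin n) ℂ} (hR : Rᴴ = R) :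
    (C * R)ᴴ * (C * R) = R * (Cᴴ * C) * R := by
  rw [Matrix.conjTranspose_mul, hR]
  noncomm_ring

lemma diag_sqrt {d : Fin n → ℝ} (hd : ∀ i, 0 ≤ d i) (U : Matrix (Fin n) (Fin n) ℂ) :
    (Matrix.diagonal (fun i => (Real.sqrt (d i) : ℂ)) * Uᴴ)ᴴ *
      (Matrix.diagonal (fun i => (Real.sqrt (d i) : ℂ)) * Uᴴ) =
    U * Matrix.diagonal (fun i => ((d i : ℝ) : ℂ)) * Uᴴ := by
  rw [Matrix.conjTranspose_mul, Matrix.conjTranspose_conjTranspose, Matrix.diagonal_conjTranspose]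
  have key : Matrix.diagonal (star fun i => (Real.sqrt (d i) : ℂ)) *
      Matrix.diagonal (fun i => (Real.sqrt (d i) : ℂ)) =
      Matrix.diagonal (fun i => ((d i : ℝ) : ℂ)) := by
    rw [Matrix.diagonal_mul_diagonal]
    apply congrArg Matrix.diagonal
    funext i
    show star ((Real.sqrt (d i) : ℂ)) * (Real.sqrt (d i) : ℂ) = _
    rw [Complex.star_def, Complex.conj_ofReal, ← Complex.ofReal_mul,
      Real.mul_self_sqrt (hd i)]
  calc U * Matrix.diagonal (star fun i => (Real.sqrt (d i) : ℂ)) *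
        (Matrix.diagonal (fun i => (Real.sqrt (d i) : ℂ)) * Uᴴ)
      = U * (Matrix.diagonal (star fun i => (Real.sqrt (d i) : ℂ)) *
          Matrix.diagonal (fun i => (Real.sqrt (d i) : ℂ))) * Uᴴ := by noncomm_ring
    _ = _ := by rw [key]

lemma R_Q_R {Q : Matrix (Fin n) (Fin n) ℂ} (hQ : Q.PosDef) :
    hrpow Q (-(1/2)) * Q * hrpow Q (-(1/2)) = 1 := by
  have h1 := hrpow_mul_hrpow hQ (-(1/2)) 1
  rw [hrpow_one hQ.1] at h1
  rw [h1, hrpow_mul_hrpow hQ]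
  have : (-(1/2) + 1 : ℝ) + -(1/2) = 0 := by norm_num
  rw [this, hrpow_zero hQ.1]

end aux

set_option maxHeartbeats 1000000 in
theorem stmt11 {n : ℕ} (s t p : ℝ) (hs : 1 ≤ s) (ht : 1 ≤ t) (hp : 1 ≤ p)
    (A B Q : Matrix (Fin n) (Fin n) ℂ) (hA : IsUnit A) (hB : IsUnit B) (hQ : Q.PosDef) :
    (∃ X : Matrix (Fin n) (Fin n) ℂ, X.PosDef ∧
        hrpow X s + Aᴴ * hrpow X (-t) * A + Bᴴ * hrpow X (-p) * B = Q) ↔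
    (∃ (U : Matrix (Fin n) (Fin n) ℂ) (d : Fin n → ℝ)
        (N₁ N₂ : Matrix (Fin n) (Fin n) ℂ),
      U ∈ Matrix.unitaryGroup (Fin n) ℂ ∧ (∀ i, 0 < d i) ∧
      A = hrpow (U * Matrix.diagonal (fun i => (d i : ℂ)) * Uᴴ) (t / (2 * s)) * N₁ ∧
      B = hrpow (U * Matrix.diagonal (fun i => (d i : ℂ)) * Uᴴ) (p / (2 * s)) * N₂ ∧
      ∃ M : Matrix (Fin n ⊕ (Fin n ⊕ Fin n)) (Fin n) ℂ,
        M = Matrix.fromRows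
          (Matrix.diagonal (fun i => (Real.sqrt (d i) : ℂ)) * Uᴴ * hrpow Q (-(1 / 2)))
          (Matrix.fromRows (N₁ * hrpow Q (-(1 / 2))) (N₂ * hrpow Q (-(1 / 2)))) ∧
        Mᴴ * M = 1) := by
  have hs0 : s ≠ 0 := by linarith
  constructor
  · rintro ⟨X, hX, hEq⟩
    set Y := hrpow X s with hYdef
    have hYpd : Y.PosDef := hrpow_posDef hX s
    have hYh : Y.IsHermitian := hYpd.1
    obtain ⟨U, hUmem, d, hdpos, key⟩ :
        ∃ U : Matrix (Fin n) (Fin n) ℂ, U ∈ Matrix.unitaryGroup (Fin n) ℂ ∧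
          ∃ d : Fin n → ℝ, (∀ i, 0 < d i) ∧
            U * Matrix.diagonal (fun i => ((d i : ℝ) : ℂ)) * Uᴴ = Y := by
      refine ⟨(hYh.eigenvectorUnitary : Matrix (Fin n) (Fin n) ℂ), SetLike.coe_mem _,
        hYh.eigenvalues, fun i => hYpd.eigenvalues_pos i, ?_⟩
      conv_rhs => rw [hYh.spectral_theorem]
      rfl
    refine ⟨U, d, hrpow Y (-(t/(2*s))) * A, hrpow Y (-(p/(2*s))) * B,
      hUmem, hdpos, ?_, ?_, ?_⟩
    · rw [key, ← Matrix.mul_assoc]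
      rw [hrpow_mul_hrpow hYpd, add_neg_cancel, hrpow_zero hYh, one_mul]
    · rw [key, ← Matrix.mul_assoc]
      rw [hrpow_mul_hrpow hYpd, add_neg_cancel, hrpow_zero hYh, one_mul]
    · refine ⟨_, rfl, ?_⟩
      set R := hrpow Q (-(1/2)) with hRdef
      have hRH : Rᴴ = R := hrpow_isHermitian hQ.1 _
      rw [Matrix.conjTranspose_fromRows_eq_fromCols_conjTranspose,
        Matrix.fromCols_mul_fromRows,
        Matrix.conjTranspose_fromRows_eq_fromCols_conjTranspose,
        Matrix.fromCols_mul_fromRows,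
        conj_block hRH, conj_block hRH, conj_block hRH,
        diag_sqrt (fun i => (hdpos i).le) U, key]
      have e1 : (hrpow Y (-(t/(2*s))) * A)ᴴ * (hrpow Y (-(t/(2*s))) * A)
          = Aᴴ * hrpow X (-t) * A := by
        have hpp : hrpow Y (-(t/(2*s))) * hrpow Y (-(t/(2*s))) = hrpow X (-t) := by
          have he : s * (-(t/(2*s)) + -(t/(2*s))) = -t := by field_simp; ring
          rw [hrpow_mul_hrpow hYpd, hYdef, hrpow_hrpow hX, he]
        rw [Matrix.conjTranspose_mul,
          (hrpow_isHermitian hYh (-(t/(2*s))) : (hrpow Y (-(t/(2*s))))ᴴ = _), ← hpp]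
        noncomm_ring
      have e2 : (hrpow Y (-(p/(2*s))) * B)ᴴ * (hrpow Y (-(p/(2*s))) * B)
          = Bᴴ * hrpow X (-p) * B := by
        have hpp : hrpow Y (-(p/(2*s))) * hrpow Y (-(p/(2*s))) = hrpow X (-p) := by
          have he : s * (-(p/(2*s)) + -(p/(2*s))) = -p := by field_simp; ring
          rw [hrpow_mul_hrpow hYpd, hYdef, hrpow_hrpow hX, he]
        rw [Matrix.conjTranspose_mul,
          (hrpow_isHermitian hYh (-(p/(2*s))) : (hrpow Y (-(p/(2*s))))ᴴ = _), ← hpp]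
        noncomm_ring
      rw [e1, e2]
      have : R * Y * R + (R * (Aᴴ * hrpow X (-t) * A) * R + R * (Bᴴ * hrpow X (-p) * B) * R)
          = R * (Y + Aᴴ * hrpow X (-t) * A + Bᴴ * hrpow X (-p) * B) * R := by noncomm_ring
      rw [this, hEq, hRdef]
      exact R_Q_R hQ
  · rintro ⟨U, d, N₁, N₂, hU, hd, hAe, hBe, M, hM, hMM⟩
    have hUu : IsUnit U := ⟨Unitary.toUnits ⟨U, hU⟩, rfl⟩
    set Y := U * Matrix.diagonal (fun i => (d i : ℂ)) * Uᴴ with hYdef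
    have hYpd : Y.PosDef :=
      posDef_conj (Matrix.PosDef.diagonal fun i => by exact_mod_cast hd i) hUu
    set R := hrpow Q (-(1/2)) with hRdef
    have hRH : Rᴴ = R := hrpow_isHermitian hQ.1 _
    subst hM
    rw [Matrix.conjTranspose_fromRows_eq_fromCols_conjTranspose,
      Matrix.fromCols_mul_fromRows,
      Matrix.conjTranspose_fromRows_eq_fromCols_conjTranspose,
      Matrix.fromCols_mul_fromRows,
      conj_block hRH, conj_block hRH, conj_block hRH,
      diag_sqrt (fun i => (hd i).le) U] at hMM
    rw [← hYdef] at hMM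
    have h2 : hrpow Q (1/2) * R = 1 := by
      have : (1/2 : ℝ) + -(1/2) = 0 := by norm_num
      rw [hRdef, hrpow_mul_hrpow hQ, this, hrpow_zero hQ.1]
    have h3 : R * hrpow Q (1/2) = 1 := by
      have : (-(1/2) : ℝ) + 1/2 = 0 := by norm_num
      rw [hRdef, hrpow_mul_hrpow hQ, this, hrpow_zero hQ.1]
    have key : Y + (N₁ᴴ * N₁ + N₂ᴴ * N₂) = Q := by
      have hS : R * (Y + (N₁ᴴ * N₁ + N₂ᴴ * N₂)) * R = 1 := by
        rw [← hMM]; noncomm_ring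
      calc Y + (N₁ᴴ * N₁ + N₂ᴴ * N₂)
          = (hrpow Q (1/2) * R) * (Y + (N₁ᴴ * N₁ + N₂ᴴ * N₂)) * (R * hrpow Q (1/2)) := by
            rw [h2, h3, one_mul, mul_one]
        _ = hrpow Q (1/2) * (R * (Y + (N₁ᴴ * N₁ + N₂ᴴ * N₂)) * R) * hrpow Q (1/2) := by
            noncomm_ring
        _ = hrpow Q (1/2) * hrpow Q (1/2) := by rw [hS, mul_one]
        _ = Q := by
            have : (1/2 : ℝ) + 1/2 = 1 := by norm_num
            rw [hrpow_mul_hrpow hQ, this, hrpow_one hQ.1]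
    refine ⟨hrpow Y s⁻¹, hrpow_posDef hYpd _, ?_⟩
    have hXs : hrpow (hrpow Y s⁻¹) s = Y := by
      rw [hrpow_hrpow hYpd, inv_mul_cancel₀ hs0, hrpow_one hYpd.1]
    have hXt : ∀ r : ℝ, hrpow (hrpow Y s⁻¹) r = hrpow Y (s⁻¹ * r) := fun r =>
      hrpow_hrpow hYpd _ _
    have hA1 : Aᴴ * hrpow (hrpow Y s⁻¹) (-t) * A = N₁ᴴ * N₁ := by
      rw [hXt, hAe, Matrix.conjTranspose_mul,
        (hrpow_isHermitian hYpd.1 (t/(2*s)) : (hrpow Y (t/(2*s)))ᴴ = _)]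
      have h4 : hrpow Y (t/(2*s)) * hrpow Y (s⁻¹ * -t) * hrpow Y (t/(2*s)) = 1 := by
        rw [hrpow_mul_hrpow hYpd, hrpow_mul_hrpow hYpd]
        have : t/(2*s) + s⁻¹ * -t + t/(2*s) = 0 := by field_simp; ring
        rw [this, hrpow_zero hYpd.1]
      calc N₁ᴴ * hrpow Y (t/(2*s)) * hrpow Y (s⁻¹ * -t) * (hrpow Y (t/(2*s)) * N₁)
          = N₁ᴴ * (hrpow Y (t/(2*s)) * hrpow Y (s⁻¹ * -t) * hrpow Y (t/(2*s))) * N₁ := by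
            noncomm_ring
        _ = N₁ᴴ * N₁ := by rw [h4, Matrix.mul_one]
    have hB1 : Bᴴ * hrpow (hrpow Y s⁻¹) (-p) * B = N₂ᴴ * N₂ := by
      rw [hXt, hBe, Matrix.conjTranspose_mul,
        (hrpow_isHermitian hYpd.1 (p/(2*s)) : (hrpow Y (p/(2*s)))ᴴ = _)]
      have h4 : hrpow Y (p/(2*s)) * hrpow Y (s⁻¹ * -p) * hrpow Y (p/(2*s)) = 1 := by
        rw [hrpow_mul_hrpow hYpd, hrpow_mul_hrpow hYpd]
        have : p/(2*s) + s⁻¹ * -p + p/(2*s) = 0 := by field_simp; ring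
        rw [this, hrpow_zero hYpd.1]
      calc N₂ᴴ * hrpow Y (p/(2*s)) * hrpow Y (s⁻¹ * -p) * (hrpow Y (p/(2*s)) * N₂)
          = N₂ᴴ * (hrpow Y (p/(2*s)) * hrpow Y (s⁻¹ * -p) * hrpow Y (p/(2*s))) * N₂ := by
            noncomm_ring
        _ = N₂ᴴ * N₂ := by rw [h4, Matrix.mul_one]
    rw [hXs, hA1, hB1, add_assoc]
    exact key
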